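/- There exists a constant C > 0, independent of L ≥ 1, such that for every u ∈ H^2((-L,L)×(0,1);ℝ²) that is divergence free, tangential on the boundary, and satisfies the Navier-slip boundary conditions with coefficients k₀ at y=0 and k₁ at y=1, one has ‖∇u‖_{L^2(Ω_L)}² ≤ C ‖u‖_{L^2(Ω_L)} ‖∇u‖_{H^1(Ω_L)}. -/

import Mathlib

open MeasureTheory Set

/-- The rectangle `Ω_L = (-L,L) × (0,1)` in `ℝ²`. -/
def rect (L : ℝ) : Set (ℝ × ℝ) := Set.Ioo (-L) L ×ˢ Set.Ioo (0 : ℝ) 1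

/-- Horizontal partial derivative. -/
noncomputable def dx (g : ℝ × ℝ → ℝ) (q : ℝ × ℝ) : ℝ := fderiv ℝ g q (1, 0)

/-- Vertical partial derivative. -/
noncomputable def dy (g : ℝ × ℝ → ℝ) (q : ℝ × ℝ) : ℝ := fderiv ℝ g q (0, 1)

/-!
On an interval of length at least `1`, integrating `f'²` by parts leaves the endpoint terms
`f f'`, and the one-dimensional trace inequality `f(e)² ≤ ∫ f² + 2 ∫ |f f'|` bounds them with
constants that do not depend on the length. With weighted AM-GM this gives
`‖f'‖² ≤ K (t ‖f‖² + ‖f''‖² / t)` for every `t ≥ 1`. Applied along horizontal and vertical lines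
to both components of `u` and optimized in `t`, it yields
`‖∇u‖² ≤ K' (‖u‖² + ‖u‖ ‖D²u‖)` on `Ω_L` uniformly in `L ≥ 1`.

The term `‖u‖²` is then absorbed by a vertical Poincaré inequality `‖u‖² ≤ 8 ‖∇u‖²`: `u²`
vanishes on `y = 0`, and `u¹` has zero mean on every vertical segment, because
`∂ₓ ∫₀¹ u¹ dy = -∫₀¹ ∂_y u² dy = 0` and `u¹` vanishes on `x = -L`.
-/

theorem two_mul_abs_mul_le {x y r : ℝ} (hr : 0 < r) : 2 * |x * y| ≤ r * x ^ 2 + y ^ 2 / r := by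
  have key : r * x ^ 2 + y ^ 2 / r - 2 * |x * y| = (r * |x| - |y|) ^ 2 / r := by
    rw [abs_mul, ← sq_abs x, ← sq_abs y]; field_simp; ring
  have : 0 ≤ (r * |x| - |y|) ^ 2 / r := by positivity
  linarith

theorem le_two_mul_add_sqrt_mul_sqrt {S M Z : ℝ} (hM : 0 ≤ M) (hZ : 0 ≤ Z)
    (h : ∀ t ≥ 1, S ≤ t * M + Z / t) : S ≤ 2 * (M + √M * √Z) := by
  have hprod : 0 ≤ √M * √Z := by positivity
  rcases le_or_gt Z M with hZM | hMZ
  · linarith [h 1 le_rfl, div_one Z]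
  rcases hM.eq_or_lt with rfl | hMpos
  · have : S ≤ 0 := ge_of_tendsto (tendsto_const_nhds.div_atTop Filter.tendsto_id)
      ((Filter.eventually_ge_atTop 1).mono fun t ht => by simpa using h t ht)
    simpa using this
  have hsM : 0 < √M := Real.sqrt_pos.2 hMpos
  have ht : 1 ≤ √Z / √M := by
    rw [le_div_iff₀ hsM, one_mul]; exact Real.sqrt_le_sqrt hMZ.le
  have key : √Z / √M * M + Z / (√Z / √M) = 2 * (√M * √Z) := by
    have hsZ : 0 < √Z := Real.sqrt_pos.2 (hMpos.trans hMZ)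
    field_simp
    rw [Real.sq_sqrt hM, Real.sq_sqrt hZ]
    ring
  linarith [h _ ht]

section Interval

variable {f f' f'' g : ℝ → ℝ} {a b : ℝ}

theorem continuous_of_forall_hasDerivAt (hf : ∀ x, HasDerivAt f (f' x) x) : Continuous f :=
  continuous_iff_continuousAt.2 fun x => (hf x).continuousAt

theorem two_mul_integral_abs_mul_le (hf : Continuous f) (hg : Continuous g) (hab : a ≤ b)
    {r : ℝ} (hr : 0 < r) :
    2 * ∫ x in a..b, |f x * g x| ≤ r * (∫ x in a..b, f x ^ 2) + (∫ x in a..b, g x ^ 2) / r := by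
  have hf2 : IntervalIntegrable (fun x => r * f x ^ 2) volume a b :=
    (continuous_const.mul (hf.fun_pow 2)).intervalIntegrable a b
  have hg2 : IntervalIntegrable (fun x => g x ^ 2 / r) volume a b :=
    ((hg.fun_pow 2).div_const r).intervalIntegrable a b
  calc 2 * ∫ x in a..b, |f x * g x| = ∫ x in a..b, 2 * |f x * g x| :=
        (intervalIntegral.integral_const_mul _ _).symm
    _ ≤ ∫ x in a..b, (r * f x ^ 2 + g x ^ 2 / r) :=
        intervalIntegral.integral_mono_on hab
          ((continuous_const.mul (hf.mul hg).abs).intervalIntegrable a b) (hf2.add hg2)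
          fun x _ => two_mul_abs_mul_le hr
    _ = r * (∫ x in a..b, f x ^ 2) + (∫ x in a..b, g x ^ 2) / r := by
        rw [intervalIntegral.integral_add hf2 hg2, intervalIntegral.integral_const_mul,
          intervalIntegral.integral_div]

theorem abs_integral_le_integral_abs_of_mem_Icc (hg : Continuous g) {y z : ℝ}
    (hy : y ∈ Icc a b) (hz : z ∈ Icc a b) : |∫ x in y..z, g x| ≤ ∫ x in a..b, |g x| := by
  wlog hyz : y ≤ z generalizing y z
  · rw [intervalIntegral.integral_symm, abs_neg]
    exact this hz hy (le_of_not_ge hyz)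
  exact (intervalIntegral.abs_integral_le_integral_abs hyz).trans
    (intervalIntegral.integral_mono_interval hy.1 hyz hz.2
      (Filter.Eventually.of_forall fun _ => abs_nonneg _) (hg.abs.intervalIntegrable a b))

theorem sq_le_sq_add_two_mul_integral_abs_mul_deriv (hf : ∀ x, HasDerivAt f (f' x) x)
    (hf' : Continuous f') {y z : ℝ} (hy : y ∈ Icc a b) (hz : z ∈ Icc a b) :
    f y ^ 2 ≤ f z ^ 2 + 2 * ∫ x in a..b, |f x * f' x| := by
  have hfc : Continuous f := continuous_of_forall_hasDerivAt hf
  have hsq : ∀ x, HasDerivAt (fun x => f x ^ 2) (2 * (f x * f' x)) x := fun x =>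
    ((hf x).fun_pow 2).congr_deriv (by ring)
  have hcont : Continuous fun x => 2 * (f x * f' x) := continuous_const.mul (hfc.mul hf')
  have hbound := abs_integral_le_integral_abs_of_mem_Icc hcont hz hy
  rw [intervalIntegral.integral_eq_sub_of_hasDerivAt (fun x _ => hsq x)
    (hcont.intervalIntegrable z y)] at hbound
  simp only [abs_mul (2 : ℝ), abs_two, intervalIntegral.integral_const_mul] at hbound
  linarith [le_abs_self (f y ^ 2 - f z ^ 2)]

theorem sub_mul_sq_le_integral_sq_add (hf : ∀ x, HasDerivAt f (f' x) x) (hf' : Continuous f')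
    (hab : a ≤ b) {e : ℝ} (he : e ∈ Icc a b) :
    (b - a) * f e ^ 2 ≤
      (∫ x in a..b, f x ^ 2) + (b - a) * (2 * ∫ x in a..b, |f x * f' x|) := by
  have hfc : Continuous f := continuous_of_forall_hasDerivAt hf
  have h : ∫ _ in a..b, f e ^ 2 ≤ ∫ x in a..b, (f x ^ 2 + 2 * ∫ x in a..b, |f x * f' x|) :=
    intervalIntegral.integral_mono_on hab intervalIntegrable_const
      (((hfc.fun_pow 2).add continuous_const).intervalIntegrable a b)
      fun x hx => sq_le_sq_add_two_mul_integral_abs_mul_deriv hf hf' he hx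
  rwa [intervalIntegral.integral_const, intervalIntegral.integral_add
    ((hfc.fun_pow 2).intervalIntegrable a b) (continuous_const.intervalIntegrable a b),
    intervalIntegral.integral_const, smul_eq_mul, smul_eq_mul] at h

theorem sq_le_integral_sq_add_of_one_le (hf : ∀ x, HasDerivAt f (f' x) x) (hf' : Continuous f')
    (hab : a + 1 ≤ b) {e : ℝ} (he : e ∈ Icc a b) {r : ℝ} (hr : 0 < r) :
    f e ^ 2 ≤ (1 + r) * (∫ x in a..b, f x ^ 2) + (∫ x in a..b, f' x ^ 2) / r := by
  have hfc : Continuous f := continuous_of_forall_hasDerivAt hf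
  have htrace := sub_mul_sq_le_integral_sq_add hf hf' (by linarith) he
  have hamgm := two_mul_integral_abs_mul_le (a := a) (b := b) hfc hf' (by linarith) hr
  have hM : 0 ≤ ∫ x in a..b, f x ^ 2 :=
    intervalIntegral.integral_nonneg (by linarith) fun _ _ => sq_nonneg _
  have hlen : 1 ≤ b - a := by linarith
  have : f e ^ 2 ≤ (∫ x in a..b, f x ^ 2) + 2 * ∫ x in a..b, |f x * f' x| := by
    nlinarith [mul_le_mul_of_nonneg_right hlen hM]
  linarith

theorem integral_sq_le_of_eq_zero (hf : ∀ x, HasDerivAt f (f' x) x) (hf' : Continuous f')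
    (hab : a ≤ b) {z : ℝ} (hz : z ∈ Icc a b) (hfz : f z = 0) {r : ℝ} (hr : 0 < r) :
    ∫ x in a..b, f x ^ 2 ≤
      (b - a) * (r * (∫ x in a..b, f x ^ 2) + (∫ x in a..b, f' x ^ 2) / r) := by
  have hfc : Continuous f := continuous_of_forall_hasDerivAt hf
  have hamgm := two_mul_integral_abs_mul_le hfc hf' hab hr
  have h := intervalIntegral.integral_mono_on hab ((hfc.fun_pow 2).intervalIntegrable a b)
    (continuous_const.intervalIntegrable (μ := volume) a b)
    fun y hy => (sq_le_sq_add_two_mul_integral_abs_mul_deriv hf hf' hy hz).trans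
      (by simpa [hfz] using hamgm)
  rwa [intervalIntegral.integral_const, smul_eq_mul] at h

theorem exists_mem_Icc_eq_zero_of_integral_eq_zero (hf : Continuous f) (hab : a < b)
    (h : ∫ x in a..b, f x = 0) : ∃ z ∈ Icc a b, f z = 0 := by
  obtain ⟨z, hz, hfz⟩ := exists_eq_interval_average hab.ne hf.continuousOn
  rw [uIoo_of_le hab.le] at hz
  exact ⟨z, Ioo_subset_Icc_self hz, by rw [hfz, interval_average_eq_div, h, zero_div]⟩

theorem two_mul_abs_mul_deriv_le (hf : ∀ x, HasDerivAt f (f' x) x)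
    (hf' : ∀ x, HasDerivAt f' (f'' x) x) (hf'' : Continuous f'') (hab : a + 1 ≤ b) {e : ℝ}
    (he : e ∈ Icc a b) {s : ℝ} (hs : 1 ≤ s) :
    2 * |f e * f' e| ≤ 264 * s ^ 2 * (∫ x in a..b, f x ^ 2) + (∫ x in a..b, f' x ^ 2) / 2 +
      (∫ x in a..b, f'' x ^ 2) / (8 * s ^ 2) := by
  have hf'c : Continuous f' := continuous_of_forall_hasDerivAt hf'
  set M := ∫ x in a..b, f x ^ 2
  set S := ∫ x in a..b, f' x ^ 2
  set Z := ∫ x in a..b, f'' x ^ 2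
  have hM : 0 ≤ M := intervalIntegral.integral_nonneg (by linarith) fun _ _ => sq_nonneg _
  have hS : 0 ≤ S := intervalIntegral.integral_nonneg (by linarith) fun _ _ => sq_nonneg _
  have h₀ := sq_le_integral_sq_add_of_one_le hf hf'c hab he (r := 32 * s) (by positivity)
  have h₁ := sq_le_integral_sq_add_of_one_le hf' hf'' hab he (r := s) (by positivity)
  have hq : (1 + s) / (8 * s) ≤ 1 / 4 := by rw [div_le_iff₀ (by positivity)]; linarith
  -- the weights `8s`, `32s`, `s` make the multiples of `S` add up to at most `S / 2`
  calc 2 * |f e * f' e| ≤ 8 * s * f e ^ 2 + f' e ^ 2 / (8 * s) :=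
        two_mul_abs_mul_le (by positivity)
    _ ≤ 8 * s * ((1 + 32 * s) * M + S / (32 * s)) + ((1 + s) * S + Z / s) / (8 * s) := by
        gcongr
    _ = 8 * s * (1 + 32 * s) * M + S / 4 + (1 + s) / (8 * s) * S + Z / (8 * s ^ 2) := by
        field_simp; ring
    _ ≤ 264 * s ^ 2 * M + S / 2 + Z / (8 * s ^ 2) := by
        nlinarith [mul_le_mul_of_nonneg_right hq hS, mul_nonneg (sub_nonneg.2 hs) hM,
          mul_nonneg (mul_nonneg (sub_nonneg.2 hs) (by linarith : (0 : ℝ) ≤ s)) hM]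

theorem integral_deriv_sq_le (hf : ∀ x, HasDerivAt f (f' x) x)
    (hf' : ∀ x, HasDerivAt f' (f'' x) x) (hf'' : Continuous f'') (hab : a + 1 ≤ b)
    {t : ℝ} (ht : 1 ≤ t) :
    ∫ x in a..b, f' x ^ 2 ≤
      529 * t * (∫ x in a..b, f x ^ 2) + 529 / t * ∫ x in a..b, f'' x ^ 2 := by
  have hfc : Continuous f := continuous_of_forall_hasDerivAt hf
  have hf'c : Continuous f' := continuous_of_forall_hasDerivAt hf'
  have hs : 1 ≤ √t := Real.one_le_sqrt.2 ht
  have hb := two_mul_abs_mul_deriv_le hf hf' hf'' hab ⟨by linarith, le_rfl⟩ hs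
  have ha := two_mul_abs_mul_deriv_le hf hf' hf'' hab ⟨le_rfl, by linarith⟩ hs
  rw [Real.sq_sqrt (by linarith)] at ha hb
  set M := ∫ x in a..b, f x ^ 2
  set S := ∫ x in a..b, f' x ^ 2
  set Z := ∫ x in a..b, f'' x ^ 2
  have hparts : S = f b * f' b - f a * f' a - ∫ x in a..b, f x * f'' x := by
    have := intervalIntegral.integral_mul_deriv_eq_deriv_mul (fun x _ => hf x) (fun x _ => hf' x)
      (hf'c.intervalIntegrable a b) (hf''.intervalIntegrable a b)
    simp only [S, sq]
    linarith
  have hinterior : -∫ x in a..b, f x * f'' x ≤ (t * M + Z / t) / 2 := by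
    have hamgm := two_mul_integral_abs_mul_le hfc hf'' (a := a) (b := b) (by linarith)
      (r := t) (by linarith)
    have habs := intervalIntegral.abs_integral_le_integral_abs
      (f := fun x => f x * f'' x) (μ := volume) (by linarith : a ≤ b)
    linarith [neg_le_abs (∫ x in a..b, f x * f'' x)]
  have hZt : 0 ≤ Z / t :=
    div_nonneg (intervalIntegral.integral_nonneg (by linarith) fun _ _ => sq_nonneg _)
      (by linarith)
  have hZ8 : Z / (8 * t) = Z / t / 8 := by ring
  have hZ529 : 529 / t * Z = 529 * (Z / t) := by ring
  linarith [le_abs_self (f b * f' b), neg_le_abs (f a * f' a)]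

end Interval

section PartialDerivatives

variable {G : ℝ × ℝ → ℝ}

theorem ContDiff.contDiff_dx {n : WithTop ℕ∞} (hG : ContDiff ℝ (n + 1) G) :
    ContDiff ℝ n (dx G) :=
  (hG.fderiv_right le_rfl).clm_apply contDiff_const

theorem ContDiff.contDiff_dy {n : WithTop ℕ∞} (hG : ContDiff ℝ (n + 1) G) :
    ContDiff ℝ n (dy G) :=
  (hG.fderiv_right le_rfl).clm_apply contDiff_const

theorem ContDiff.continuous_dx (hG : ContDiff ℝ 1 G) : Continuous (dx G) :=
  (hG.contDiff_dx (n := 0)).continuous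

theorem ContDiff.continuous_dy (hG : ContDiff ℝ 1 G) : Continuous (dy G) :=
  (hG.contDiff_dy (n := 0)).continuous

theorem hasDerivAt_dx {x y : ℝ} (hG : DifferentiableAt ℝ G (x, y)) :
    HasDerivAt (fun t => G (t, y)) (dx G (x, y)) x :=
  hG.hasFDerivAt.comp_hasDerivAt x ((hasDerivAt_id x).prodMk (hasDerivAt_const x y))

theorem hasDerivAt_dy {x y : ℝ} (hG : DifferentiableAt ℝ G (x, y)) :
    HasDerivAt (fun t => G (x, t)) (dy G (x, y)) y :=
  hG.hasFDerivAt.comp_hasDerivAt y ((hasDerivAt_const y x).prodMk (hasDerivAt_id y))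

end PartialDerivatives

section Pointwise

variable {E F : Type*} [NormedAddCommGroup E] [NormedSpace ℝ E] [NormedAddCommGroup F]
  [NormedSpace ℝ F]

theorem sq_apply_le_sq {ℓ : F →L[ℝ] ℝ} (hℓ : ‖ℓ‖ ≤ 1) {w : F} {r : ℝ} (hw : ‖w‖ ≤ r) :
    ℓ w ^ 2 ≤ r ^ 2 := by
  have h : |ℓ w| ≤ r :=
    calc |ℓ w| = ‖ℓ w‖ := (Real.norm_eq_abs _).symm
      _ ≤ ‖ℓ‖ * ‖w‖ := ℓ.le_opNorm w
      _ ≤ 1 * r := mul_le_mul hℓ hw (norm_nonneg _) zero_le_one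
      _ = r := one_mul r
  rw [← sq_abs]
  exact pow_le_pow_left₀ (abs_nonneg _) h 2

theorem fderiv_clm_comp_apply (ℓ : F →L[ℝ] ℝ) {u : E → F} {p : E} (hu : DifferentiableAt ℝ u p)
    (v : E) : fderiv ℝ (fun q => ℓ (u q)) p v = ℓ (fderiv ℝ u p v) := by
  have h : HasFDerivAt (fun q => ℓ (u q)) (ℓ.comp (fderiv ℝ u p)) p :=
    ℓ.hasFDerivAt.comp p hu.hasFDerivAt
  rw [h.fderiv]
  rfl

theorem fderiv_fderiv_clm_comp_apply (ℓ : F →L[ℝ] ℝ) {u : E → F} (hu : ContDiff ℝ 2 u)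
    (p v w : E) :
    fderiv ℝ (fun q => fderiv ℝ (fun q' => ℓ (u q')) q v) p w =
      ℓ (fderiv ℝ (fderiv ℝ u) p w v) := by
  have hfun : (fun q => fderiv ℝ (fun q' => ℓ (u q')) q v) =
      fun q => (ℓ.comp (ContinuousLinearMap.apply ℝ F v)) (fderiv ℝ u q) :=
    funext fun q => fderiv_clm_comp_apply ℓ (hu.differentiable two_ne_zero q) v
  rw [hfun, fderiv_clm_comp_apply _
    ((hu.fderiv_right (m := 1) le_rfl).differentiable one_ne_zero p)]
  rfl

theorem sq_fderiv_clm_comp_apply_le {ℓ : F →L[ℝ] ℝ} (hℓ : ‖ℓ‖ ≤ 1) {u : E → F} {p : E}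
    (hu : DifferentiableAt ℝ u p) {v : E} (hv : ‖v‖ ≤ 1) :
    fderiv ℝ (fun q => ℓ (u q)) p v ^ 2 ≤ ‖fderiv ℝ u p‖ ^ 2 := by
  rw [fderiv_clm_comp_apply ℓ hu]
  exact sq_apply_le_sq hℓ (((fderiv ℝ u p).le_opNorm_of_le hv).trans_eq (mul_one _))

theorem sq_fderiv_fderiv_clm_comp_apply_le {ℓ : F →L[ℝ] ℝ} (hℓ : ‖ℓ‖ ≤ 1) {u : E → F}
    (hu : ContDiff ℝ 2 u) (p : E) {v w : E} (hv : ‖v‖ ≤ 1) (hw : ‖w‖ ≤ 1) :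
    fderiv ℝ (fun q => fderiv ℝ (fun q' => ℓ (u q')) q v) p w ^ 2 ≤
      ‖fderiv ℝ (fderiv ℝ u) p‖ ^ 2 := by
  rw [fderiv_fderiv_clm_comp_apply ℓ hu]
  refine sq_apply_le_sq hℓ ?_
  calc ‖fderiv ℝ (fderiv ℝ u) p w v‖ ≤ ‖fderiv ℝ (fderiv ℝ u) p‖ * ‖w‖ * ‖v‖ :=
        (fderiv ℝ (fderiv ℝ u) p).le_opNorm₂ w v
    _ ≤ ‖fderiv ℝ (fderiv ℝ u) p‖ * 1 * 1 := by gcongr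
    _ = ‖fderiv ℝ (fderiv ℝ u) p‖ := by ring

end Pointwise

theorem norm_sq_le_fst_sq_add_snd_sq (w : ℝ × ℝ) : ‖w‖ ^ 2 ≤ w.1 ^ 2 + w.2 ^ 2 := by
  rw [Prod.norm_def, Real.norm_eq_abs, Real.norm_eq_abs]
  rcases max_cases |w.1| |w.2| with ⟨h, _⟩ | ⟨h, _⟩ <;> rw [h, sq_abs] <;>
    nlinarith [sq_nonneg w.1, sq_nonneg w.2]

theorem opNorm_sq_le_two_mul_sum_sq_entries (A : ℝ × ℝ →L[ℝ] ℝ × ℝ) :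
    ‖A‖ ^ 2 ≤
      2 * (((A (1, 0)).1 ^ 2 + (A (0, 1)).1 ^ 2) + ((A (1, 0)).2 ^ 2 + (A (0, 1)).2 ^ 2)) := by
  have hcols : ‖A‖ ≤ ‖A (1, 0)‖ + ‖A (0, 1)‖ := by
    refine A.opNorm_le_bound (by positivity) fun v => ?_
    have hv : v = v.1 • ((1 : ℝ), (0 : ℝ)) + v.2 • ((0 : ℝ), (1 : ℝ)) := by ext <;> simp
    calc ‖A v‖ = ‖v.1 • A (1, 0) + v.2 • A (0, 1)‖ := by
          conv_lhs => rw [hv]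
          rw [map_add, map_smul, map_smul]
      _ ≤ ‖v.1‖ * ‖A (1, 0)‖ + ‖v.2‖ * ‖A (0, 1)‖ :=
          (norm_add_le _ _).trans (by rw [norm_smul, norm_smul])
      _ ≤ ‖v‖ * ‖A (1, 0)‖ + ‖v‖ * ‖A (0, 1)‖ := by
          gcongr
          · exact norm_fst_le v
          · exact norm_snd_le v
      _ = (‖A (1, 0)‖ + ‖A (0, 1)‖) * ‖v‖ := by ring
  have h₁ := norm_sq_le_fst_sq_add_snd_sq (A (1, 0))
  have h₂ := norm_sq_le_fst_sq_add_snd_sq (A (0, 1))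
  nlinarith [norm_nonneg A, sq_nonneg (‖A (1, 0)‖ - ‖A (0, 1)‖), norm_nonneg (A (1, 0)),
    norm_nonneg (A (0, 1))]

section Rectangle

variable {a b c d : ℝ} {F G H : ℝ × ℝ → ℝ}

theorem integrableOn_uIcc_prod_uIcc (hF : Continuous F) :
    IntegrableOn F (uIcc a b ×ˢ uIcc c d) :=
  hF.continuousOn.integrableOn_compact (isCompact_uIcc.prod isCompact_uIcc)

theorem integrableOn_Ioo_prod_Ioo (hF : Continuous F) : IntegrableOn F (Ioo a b ×ˢ Ioo c d) :=
  (integrableOn_uIcc_prod_uIcc hF).mono_set <| prod_mono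
    (Ioo_subset_Icc_self.trans Icc_subset_uIcc) (Ioo_subset_Icc_self.trans Icc_subset_uIcc)

theorem setIntegral_Ioo_prod_Ioo_eq_integral_integral (hF : Continuous F) (hab : a ≤ b)
    (hcd : c ≤ d) :
    ∫ p in Ioo a b ×ˢ Ioo c d, F p = ∫ x in a..b, ∫ y in c..d, F (x, y) := by
  have hint : IntegrableOn F (Ioo a b ×ˢ Ioo c d) (volume.prod volume) :=
    integrableOn_Ioo_prod_Ioo hF
  simp only [Measure.volume_eq_prod, setIntegral_prod _ hint, intervalIntegral.integral_of_le hab,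
    intervalIntegral.integral_of_le hcd, integral_Ioc_eq_integral_Ioo]

theorem setIntegral_Ioo_prod_Ioo_eq_integral_integral_swap (hF : Continuous F) (hab : a ≤ b)
    (hcd : c ≤ d) :
    ∫ p in Ioo a b ×ˢ Ioo c d, F p = ∫ y in c..d, ∫ x in a..b, F (x, y) := by
  rw [setIntegral_Ioo_prod_Ioo_eq_integral_integral hF hab hcd,
    intervalIntegral_intervalIntegral_swap]
  exact (integrableOn_uIcc_prod_uIcc hF).mono_set (prod_mono uIoc_subset_uIcc uIoc_subset_uIcc)

theorem setIntegral_Ioo_prod_Ioo_le_of_x_slices (hF : Continuous F) (hG : Continuous G)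
    (hH : Continuous H) (hab : a ≤ b) (hcd : c ≤ d) {α β : ℝ}
    (h : ∀ y ∈ Icc c d, ∫ x in a..b, F (x, y) ≤
      α * (∫ x in a..b, G (x, y)) + β * ∫ x in a..b, H (x, y)) :
    ∫ p in Ioo a b ×ˢ Ioo c d, F p ≤
      α * (∫ p in Ioo a b ×ˢ Ioo c d, G p) + β * ∫ p in Ioo a b ×ˢ Ioo c d, H p := by
  have hslice : ∀ {K : ℝ × ℝ → ℝ}, Continuous K →
      IntervalIntegrable (fun y => ∫ x in a..b, K (x, y)) volume c d := fun {K} hK =>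
    (intervalIntegral.continuous_parametric_intervalIntegral_of_continuous'
      (f := fun y x => K (x, y)) (hK.comp continuous_swap) a b).intervalIntegrable c d
  simp only [setIntegral_Ioo_prod_Ioo_eq_integral_integral_swap (F := F) hF hab hcd,
    setIntegral_Ioo_prod_Ioo_eq_integral_integral_swap hG hab hcd,
    setIntegral_Ioo_prod_Ioo_eq_integral_integral_swap hH hab hcd]
  rw [← intervalIntegral.integral_const_mul, ← intervalIntegral.integral_const_mul,
    ← intervalIntegral.integral_add ((hslice hG).const_mul α) ((hslice hH).const_mul β)]
  exact intervalIntegral.integral_mono_on hcd (hslice hF)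
    (((hslice hG).const_mul α).add ((hslice hH).const_mul β)) h

theorem setIntegral_Ioo_prod_Ioo_le_of_y_slices (hF : Continuous F) (hG : Continuous G)
    (hH : Continuous H) (hab : a ≤ b) (hcd : c ≤ d) {α β : ℝ}
    (h : ∀ x ∈ Icc a b, ∫ y in c..d, F (x, y) ≤
      α * (∫ y in c..d, G (x, y)) + β * ∫ y in c..d, H (x, y)) :
    ∫ p in Ioo a b ×ˢ Ioo c d, F p ≤
      α * (∫ p in Ioo a b ×ˢ Ioo c d, G p) + β * ∫ p in Ioo a b ×ˢ Ioo c d, H p := by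
  have hslice : ∀ {K : ℝ × ℝ → ℝ}, Continuous K →
      IntervalIntegrable (fun x => ∫ y in c..d, K (x, y)) volume a b := fun {K} hK =>
    (intervalIntegral.continuous_parametric_intervalIntegral_of_continuous'
      (f := fun x y => K (x, y)) hK c d).intervalIntegrable a b
  simp only [setIntegral_Ioo_prod_Ioo_eq_integral_integral (F := F) hF hab hcd,
    setIntegral_Ioo_prod_Ioo_eq_integral_integral hG hab hcd,
    setIntegral_Ioo_prod_Ioo_eq_integral_integral hH hab hcd]
  rw [← intervalIntegral.integral_const_mul, ← intervalIntegral.integral_const_mul,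
    ← intervalIntegral.integral_add ((hslice hG).const_mul α) ((hslice hH).const_mul β)]
  exact intervalIntegral.integral_mono_on hab (hslice hF)
    (((hslice hG).const_mul α).add ((hslice hH).const_mul β)) h

theorem integral_dx_sq_le (hG : ContDiff ℝ 2 G) (hab : a + 1 ≤ b) (hcd : c ≤ d) {t : ℝ}
    (ht : 1 ≤ t) :
    ∫ p in Ioo a b ×ˢ Ioo c d, dx G p ^ 2 ≤
      529 * t * (∫ p in Ioo a b ×ˢ Ioo c d, G p ^ 2) +
        529 / t * ∫ p in Ioo a b ×ˢ Ioo c d, dx (dx G) p ^ 2 := by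
  have hG₁ : ContDiff ℝ 1 (dx G) := hG.contDiff_dx
  refine setIntegral_Ioo_prod_Ioo_le_of_x_slices (hG₁.continuous.fun_pow 2)
    (hG.continuous.fun_pow 2) (hG₁.continuous_dx.fun_pow 2) (by linarith) hcd fun y _ => ?_
  exact integral_deriv_sq_le (fun x => hasDerivAt_dx (hG.differentiable two_ne_zero _))
    (fun x => hasDerivAt_dx (hG₁.differentiable one_ne_zero _))
    (hG₁.continuous_dx.comp (continuous_id.prodMk continuous_const)) hab ht

theorem integral_dy_sq_le (hG : ContDiff ℝ 2 G) (hab : a ≤ b) (hcd : c + 1 ≤ d) {t : ℝ}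
    (ht : 1 ≤ t) :
    ∫ p in Ioo a b ×ˢ Ioo c d, dy G p ^ 2 ≤
      529 * t * (∫ p in Ioo a b ×ˢ Ioo c d, G p ^ 2) +
        529 / t * ∫ p in Ioo a b ×ˢ Ioo c d, dy (dy G) p ^ 2 := by
  have hG₁ : ContDiff ℝ 1 (dy G) := hG.contDiff_dy
  refine setIntegral_Ioo_prod_Ioo_le_of_y_slices (hG₁.continuous.fun_pow 2)
    (hG.continuous.fun_pow 2) (hG₁.continuous_dy.fun_pow 2) hab (by linarith) fun x _ => ?_
  exact integral_deriv_sq_le (fun y => hasDerivAt_dy (hG.differentiable two_ne_zero _))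
    (fun y => hasDerivAt_dy (hG₁.differentiable one_ne_zero _))
    (hG₁.continuous_dy.comp (continuous_const.prodMk continuous_id)) hcd ht

theorem integral_sq_le_integral_dy_sq (hG : ContDiff ℝ 1 G) (hab : a ≤ b) (hcd : c < d)
    (hzero : ∀ x ∈ Icc a b, ∃ y ∈ Icc c d, G (x, y) = 0) :
    ∫ p in Ioo a b ×ˢ Ioo c d, G p ^ 2 ≤
      4 * (d - c) ^ 2 * ∫ p in Ioo a b ×ˢ Ioo c d, dy G p ^ 2 := by
  have hlen : 0 < d - c := sub_pos.2 hcd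
  have h := setIntegral_Ioo_prod_Ioo_le_of_y_slices (hG.continuous.fun_pow 2)
    (hG.continuous.fun_pow 2) (hG.continuous_dy.fun_pow 2) hab hcd.le
    (α := 1 / 2) (β := 2 * (d - c) ^ 2) fun x hx => by
      obtain ⟨y, hy, hGy⟩ := hzero x hx
      have := integral_sq_le_of_eq_zero (fun y => hasDerivAt_dy (hG.differentiable one_ne_zero _))
        (hG.continuous_dy.comp (continuous_const.prodMk continuous_id)) hcd.le hy hGy
        (r := 1 / (2 * (d - c))) (by positivity)
      convert this using 1
      field_simp
  linarith

theorem integral_eq_zero_of_dx_add_dy_eq_zero {v w : ℝ × ℝ → ℝ} (hv : ContDiff ℝ 1 v)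
    (hw : ContDiff ℝ 1 w) (hdiv : ∀ p, dx v p + dy w p = 0) (hcd : c ≤ d)
    (hva : ∀ y ∈ Icc c d, v (a, y) = 0) (hwcd : ∀ x ∈ Icc a b, w (x, c) = 0 ∧ w (x, d) = 0)
    {x : ℝ} (hx : x ∈ Icc a b) : ∫ y in c..d, v (x, y) = 0 := by
  calc ∫ y in c..d, v (x, y) = ∫ y in c..d, ∫ t in a..x, dx v (t, y) := by
        refine intervalIntegral.integral_congr fun y hy => ?_
        rw [uIcc_of_le hcd] at hy
        rw [intervalIntegral.integral_eq_sub_of_hasDerivAt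
          (fun t _ => hasDerivAt_dx (hv.differentiable one_ne_zero _))
          ((hv.continuous_dx.comp (continuous_id.prodMk continuous_const)).intervalIntegrable a x),
          hva y hy, sub_zero]
    _ = ∫ t in a..x, ∫ y in c..d, dx v (t, y) :=
        (intervalIntegral_intervalIntegral_swap (F := fun t y => dx v (t, y))
          ((integrableOn_uIcc_prod_uIcc hv.continuous_dx).mono_set
            (prod_mono uIoc_subset_uIcc uIoc_subset_uIcc))).symm
    _ = 0 := by
        refine (intervalIntegral.integral_congr (g := fun _ => 0) fun t ht => ?_).trans
          intervalIntegral.integral_zero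
        rw [uIcc_of_le hx.1] at ht
        have hwt := hwcd t ⟨ht.1, ht.2.trans hx.2⟩
        have hftc := intervalIntegral.integral_eq_sub_of_hasDerivAt
          (fun y _ => hasDerivAt_dy (hw.differentiable one_ne_zero (t, y)))
          ((hw.continuous_dy.comp (continuous_const.prodMk continuous_id)).intervalIntegrable c d)
        have hdx : ∀ y, dx v (t, y) = -dy w (t, y) := fun y =>
          eq_neg_of_add_eq_zero_left (hdiv (t, y))
        simp only [hdx, intervalIntegral.integral_neg, hftc, hwt.1, hwt.2, sub_zero, neg_zero]

theorem integral_dx_sq_add_dy_sq_le {u : ℝ × ℝ → ℝ × ℝ} (hu : ContDiff ℝ 2 u)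
    (hab : a + 1 ≤ b) (hcd : c + 1 ≤ d) {ℓ : ℝ × ℝ →L[ℝ] ℝ} (hℓ : ‖ℓ‖ ≤ 1) {t : ℝ} (ht : 1 ≤ t) :
    ∫ p in Ioo a b ×ˢ Ioo c d, (dx (fun q => ℓ (u q)) p ^ 2 + dy (fun q => ℓ (u q)) p ^ 2) ≤
      1058 * t * (∫ p in Ioo a b ×ˢ Ioo c d, ‖u p‖ ^ 2) +
        1058 / t * ∫ p in Ioo a b ×ˢ Ioo c d, ‖fderiv ℝ (fderiv ℝ u) p‖ ^ 2 := by
  set Q := Ioo a b ×ˢ Ioo c d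
  set M := ∫ p in Q, ‖u p‖ ^ 2
  set Z := ∫ p in Q, ‖fderiv ℝ (fderiv ℝ u) p‖ ^ 2
  have hD₂ : Continuous fun p => ‖fderiv ℝ (fderiv ℝ u) p‖ ^ 2 :=
    (((hu.fderiv_right (m := 1) le_rfl).continuous_fderiv one_ne_zero).norm
      (E := ℝ × ℝ →L[ℝ] ℝ × ℝ →L[ℝ] ℝ × ℝ)).fun_pow 2
  have hg : ContDiff ℝ 2 fun q => ℓ (u q) := ℓ.contDiff.comp hu
  have hM : ∫ p in Q, ℓ (u p) ^ 2 ≤ M :=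
    setIntegral_mono (integrableOn_Ioo_prod_Ioo (by fun_prop))
      (integrableOn_Ioo_prod_Ioo (by fun_prop)) fun p => sq_apply_le_sq hℓ le_rfl
  have hZx : ∫ p in Q, dx (dx fun q => ℓ (u q)) p ^ 2 ≤ Z :=
    setIntegral_mono (integrableOn_Ioo_prod_Ioo (hg.contDiff_dx.continuous_dx.fun_pow 2))
      (integrableOn_Ioo_prod_Ioo hD₂)
      fun p => sq_fderiv_fderiv_clm_comp_apply_le hℓ hu p (by simp) (by simp)
  have hZy : ∫ p in Q, dy (dy fun q => ℓ (u q)) p ^ 2 ≤ Z :=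
    setIntegral_mono (integrableOn_Ioo_prod_Ioo (hg.contDiff_dy.continuous_dy.fun_pow 2))
      (integrableOn_Ioo_prod_Ioo hD₂)
      fun p => sq_fderiv_fderiv_clm_comp_apply_le hℓ hu p (by simp) (by simp)
  have h529 : 0 ≤ 529 / t := by positivity
  rw [integral_add
    (integrableOn_Ioo_prod_Ioo ((hg.of_le (by norm_num)).continuous_dx.fun_pow 2))
    (integrableOn_Ioo_prod_Ioo ((hg.of_le (by norm_num)).continuous_dy.fun_pow 2))]
  calc _ ≤ (529 * t * (∫ p in Q, ℓ (u p) ^ 2) +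
            529 / t * ∫ p in Q, dx (dx fun q => ℓ (u q)) p ^ 2) +
          (529 * t * (∫ p in Q, ℓ (u p) ^ 2) +
            529 / t * ∫ p in Q, dy (dy fun q => ℓ (u q)) p ^ 2) :=
        add_le_add (integral_dx_sq_le hg hab (by linarith) ht)
          (integral_dy_sq_le hg (by linarith) hcd ht)
    _ ≤ (529 * t * M + 529 / t * Z) + (529 * t * M + 529 / t * Z) := by gcongr
    _ = 1058 * t * M + 1058 / t * Z := by ring

theorem integral_norm_fderiv_sq_le {u : ℝ × ℝ → ℝ × ℝ} (hu : ContDiff ℝ 2 u) (hab : a + 1 ≤ b)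
    (hcd : c + 1 ≤ d) :
    ∫ p in Ioo a b ×ˢ Ioo c d, ‖fderiv ℝ u p‖ ^ 2 ≤
      8464 * ((∫ p in Ioo a b ×ˢ Ioo c d, ‖u p‖ ^ 2) +
        √(∫ p in Ioo a b ×ˢ Ioo c d, ‖u p‖ ^ 2) *
          √(∫ p in Ioo a b ×ˢ Ioo c d, ‖fderiv ℝ (fderiv ℝ u) p‖ ^ 2)) := by
  set Q := Ioo a b ×ˢ Ioo c d
  have hQ : MeasurableSet Q := measurableSet_Ioo.prod measurableSet_Ioo
  set u₁ := fun q => ContinuousLinearMap.fst ℝ ℝ ℝ (u q)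
  set u₂ := fun q => ContinuousLinearMap.snd ℝ ℝ ℝ (u q)
  have hcont : ∀ ℓ : ℝ × ℝ →L[ℝ] ℝ,
      Continuous fun p => dx (fun q => ℓ (u q)) p ^ 2 + dy (fun q => ℓ (u q)) p ^ 2 := fun ℓ =>
    have hg : ContDiff ℝ 1 fun q => ℓ (u q) := ℓ.contDiff.comp (hu.of_le (by norm_num))
    (hg.continuous_dx.fun_pow 2).add (hg.continuous_dy.fun_pow 2)
  have hentries : ∀ p, ‖fderiv ℝ u p‖ ^ 2 ≤
      2 * ((dx u₁ p ^ 2 + dy u₁ p ^ 2) + (dx u₂ p ^ 2 + dy u₂ p ^ 2)) := fun p => by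
    simp only [dx, dy, u₁, u₂, fderiv_clm_comp_apply _ (hu.differentiable two_ne_zero p)]
    exact opNorm_sq_le_two_mul_sum_sq_entries _
  have hX : ∫ p in Q, ‖fderiv ℝ u p‖ ^ 2 ≤
      2 * ((∫ p in Q, (dx u₁ p ^ 2 + dy u₁ p ^ 2)) + ∫ p in Q, (dx u₂ p ^ 2 + dy u₂ p ^ 2)) := by
    rw [← integral_add (integrableOn_Ioo_prod_Ioo (hcont _)) (integrableOn_Ioo_prod_Ioo (hcont _)),
      ← integral_const_mul]
    exact setIntegral_mono (integrableOn_Ioo_prod_Ioo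
      ((hu.continuous_fderiv two_ne_zero).norm.fun_pow 2))
      (integrableOn_Ioo_prod_Ioo (continuous_const.mul ((hcont _).add (hcont _)))) hentries
  have hgradient : ∀ t ≥ 1, (∫ p in Q, ‖fderiv ℝ u p‖ ^ 2) / 4232 ≤
      t * (∫ p in Q, ‖u p‖ ^ 2) + (∫ p in Q, ‖fderiv ℝ (fderiv ℝ u) p‖ ^ 2) / t := fun t ht => by
    have h₁ := integral_dx_sq_add_dy_sq_le hu hab hcd (ContinuousLinearMap.norm_fst_le ℝ ℝ ℝ) ht
    have h₂ := integral_dx_sq_add_dy_sq_le hu hab hcd (ContinuousLinearMap.norm_snd_le ℝ ℝ ℝ) ht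
    have h1058 : 1058 / t * (∫ p in Q, ‖fderiv ℝ (fderiv ℝ u) p‖ ^ 2) =
        1058 * ((∫ p in Q, ‖fderiv ℝ (fderiv ℝ u) p‖ ^ 2) / t) := by ring
    rw [div_le_iff₀ (by norm_num)]
    linarith
  linarith [le_two_mul_add_sqrt_mul_sqrt (setIntegral_nonneg hQ fun _ _ => sq_nonneg _)
    (setIntegral_nonneg hQ fun _ _ => sq_nonneg _) hgradient]

theorem integral_norm_sq_le_integral_norm_fderiv_sq {u : ℝ × ℝ → ℝ × ℝ} (hu : ContDiff ℝ 1 u)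
    (hab : a ≤ b) (hcd : c < d)
    (hdiv : ∀ p, dx (fun q => (u q).1) p + dy (fun q => (u q).2) p = 0)
    (hleft : ∀ y ∈ Icc c d, (u (a, y)).1 = 0)
    (hbottom_top : ∀ x ∈ Icc a b, (u (x, c)).2 = 0 ∧ (u (x, d)).2 = 0) :
    ∫ p in Ioo a b ×ˢ Ioo c d, ‖u p‖ ^ 2 ≤
      8 * (d - c) ^ 2 * ∫ p in Ioo a b ×ˢ Ioo c d, ‖fderiv ℝ u p‖ ^ 2 := by
  set Q := Ioo a b ×ˢ Ioo c d
  have hu₁ : ContDiff ℝ 1 fun q => (u q).1 := contDiff_fst.comp hu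
  have hu₂ : ContDiff ℝ 1 fun q => (u q).2 := contDiff_snd.comp hu
  have hdy : ∀ ℓ : ℝ × ℝ →L[ℝ] ℝ, ‖ℓ‖ ≤ 1 →
      ∫ p in Q, dy (fun q => ℓ (u q)) p ^ 2 ≤ ∫ p in Q, ‖fderiv ℝ u p‖ ^ 2 := fun ℓ hℓ =>
    setIntegral_mono
      (integrableOn_Ioo_prod_Ioo ((ℓ.contDiff.comp hu).continuous_dy.fun_pow 2))
      (integrableOn_Ioo_prod_Ioo ((hu.continuous_fderiv one_ne_zero).norm.fun_pow 2))
      fun p => sq_fderiv_clm_comp_apply_le hℓ (hu.differentiable one_ne_zero p) (by simp)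
  have h₁ := integral_sq_le_integral_dy_sq hu₁ hab hcd fun x hx =>
    exists_mem_Icc_eq_zero_of_integral_eq_zero
      (hu.continuous.fst.comp (continuous_const.prodMk continuous_id)) hcd
      (integral_eq_zero_of_dx_add_dy_eq_zero hu₁ hu₂ hdiv hcd.le hleft hbottom_top hx)
  have h₂ := integral_sq_le_integral_dy_sq hu₂ hab hcd fun x hx =>
    ⟨c, left_mem_Icc.2 hcd.le, (hbottom_top x hx).1⟩
  have hy₁ : ∫ p in Q, dy (fun q => (u q).1) p ^ 2 ≤ ∫ p in Q, ‖fderiv ℝ u p‖ ^ 2 :=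
    hdy _ (ContinuousLinearMap.norm_fst_le ℝ ℝ ℝ)
  have hy₂ : ∫ p in Q, dy (fun q => (u q).2) p ^ 2 ≤ ∫ p in Q, ‖fderiv ℝ u p‖ ^ 2 :=
    hdy _ (ContinuousLinearMap.norm_snd_le ℝ ℝ ℝ)
  have hsplit : ∫ p in Q, ‖u p‖ ^ 2 ≤ (∫ p in Q, (u p).1 ^ 2) + ∫ p in Q, (u p).2 ^ 2 := by
    rw [← integral_add (integrableOn_Ioo_prod_Ioo (hu.continuous.fst.fun_pow 2))
      (integrableOn_Ioo_prod_Ioo (hu.continuous.snd.fun_pow 2))]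
    exact setIntegral_mono (integrableOn_Ioo_prod_Ioo (hu.continuous.norm.fun_pow 2))
      (integrableOn_Ioo_prod_Ioo ((hu.continuous.fst.fun_pow 2).add
        (hu.continuous.snd.fun_pow 2)))
      fun p => norm_sq_le_fst_sq_add_snd_sq (u p)
  have hlen : 0 ≤ 4 * (d - c) ^ 2 := by positivity
  nlinarith [mul_le_mul_of_nonneg_left hy₁ hlen, mul_le_mul_of_nonneg_left hy₂ hlen]

end Rectangle

theorem uniform_gradient_interpolation_general (μ k₀ k₁ : ℝ) :
    ∃ C > 0, ∀ (L : ℝ), 1 ≤ L → ∀ (u : ℝ × ℝ → ℝ × ℝ),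
      ContDiff ℝ 2 u →
      (∀ p : ℝ × ℝ, dx (fun q => (u q).1) p + dy (fun q => (u q).2) p = 0) →
      (∀ y ∈ Set.Icc (0 : ℝ) 1, (u (-L, y)).1 = 0 ∧ (u (L, y)).1 = 0) →
      (∀ x ∈ Set.Icc (-L) L, (u (x, 0)).2 = 0 ∧ (u (x, 1)).2 = 0) →
      (∀ x ∈ Set.Icc (-L) L,
        μ * dy (fun q => (u q).1) (x, 0) = -k₀ * (u (x, 0)).1 ∧
        μ * dy (fun q => (u q).1) (x, 1) = k₁ * (u (x, 1)).1) →
      (∫ p in rect L, ‖fderiv ℝ u p‖ ^ 2) ≤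
        C * (∫ p in rect L, ‖u p‖ ^ 2) ^ ((1 : ℝ) / 2) *
          ((∫ p in rect L, ‖fderiv ℝ u p‖ ^ 2) +
            (∫ p in rect L, ‖fderiv ℝ (fderiv ℝ u) p‖ ^ 2)) ^ ((1 : ℝ) / 2) := by
  refine ⟨33856, by norm_num, fun L hL u hu hdiv hlat htb _ => ?_⟩
  rw [← Real.sqrt_eq_rpow, ← Real.sqrt_eq_rpow]
  set X := ∫ p in rect L, ‖fderiv ℝ u p‖ ^ 2
  set M := ∫ p in rect L, ‖u p‖ ^ 2
  set Z := ∫ p in rect L, ‖fderiv ℝ (fderiv ℝ u) p‖ ^ 2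
  have hrect : MeasurableSet (rect L) := measurableSet_Ioo.prod measurableSet_Ioo
  have hX : 0 ≤ X := setIntegral_nonneg hrect fun _ _ => sq_nonneg _
  have hM : 0 ≤ M := setIntegral_nonneg hrect fun _ _ => sq_nonneg _
  have hZ : 0 ≤ Z := setIntegral_nonneg hrect fun _ _ => sq_nonneg _
  have hGN : X ≤ 8464 * (M + √M * √Z) :=
    integral_norm_fderiv_sq_le hu (by linarith) (by norm_num)
  have hPoincare : M ≤ 8 * X := by
    have h := integral_norm_sq_le_integral_norm_fderiv_sq (hu.of_le (by norm_num))
      (by linarith) zero_lt_one hdiv (fun y hy => (hlat y hy).1) htb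
    norm_num at h
    exact h
  have hsqrtM : √M ≤ 3 * √(X + Z) :=
    calc √M ≤ √(3 ^ 2 * (X + Z)) := Real.sqrt_le_sqrt (by linarith)
      _ = 3 * √(X + Z) := by rw [Real.sqrt_mul (by norm_num), Real.sqrt_sq (by norm_num)]
  have hsqrtZ : √Z ≤ √(X + Z) := Real.sqrt_le_sqrt (by linarith)
  calc X ≤ 8464 * (M + √M * √Z) := hGN
    _ = 8464 * √M * (√M + √Z) := by linear_combination (-8464) * Real.mul_self_sqrt hM
    _ ≤ 8464 * √M * (4 * √(X + Z)) := by gcongr; linarith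
    _ = 33856 * √M * √(X + Z) := by ring

/-- Uniform-in-`L` interpolation inequality for the gradient under Navier-slip boundary
conditions on `Ω_L = (-L,L)×(0,1)`: `‖∇u‖²_{L²} ≤ C ‖u‖_{L²} ‖∇u‖_{H¹}` with
`C = C(μ,k₀,k₁)` independent of `L ≥ 1`. -/
theorem uniform_gradient_interpolation (μ k₀ k₁ : ℝ) (hμ : 0 < μ) :
    ∃ C > 0, ∀ (L : ℝ), 1 ≤ L → ∀ (u : ℝ × ℝ → ℝ × ℝ),
      ContDiff ℝ 2 u →
      (∀ p : ℝ × ℝ, dx (fun q => (u q).1) p + dy (fun q => (u q).2) p = 0) →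
      (∀ y ∈ Set.Icc (0 : ℝ) 1, (u (-L, y)).1 = 0 ∧ (u (L, y)).1 = 0) →
      (∀ x ∈ Set.Icc (-L) L, (u (x, 0)).2 = 0 ∧ (u (x, 1)).2 = 0) →
      (∀ x ∈ Set.Icc (-L) L,
        μ * dy (fun q => (u q).1) (x, 0) = -k₀ * (u (x, 0)).1 ∧
        μ * dy (fun q => (u q).1) (x, 1) = k₁ * (u (x, 1)).1) →
      (∫ p in rect L, ‖fderiv ℝ u p‖ ^ 2) ≤
        C * (∫ p in rect L, ‖u p‖ ^ 2) ^ ((1 : ℝ) / 2) *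
          ((∫ p in rect L, ‖fderiv ℝ u p‖ ^ 2) +
            (∫ p in rect L, ‖fderiv ℝ (fderiv ℝ u) p‖ ^ 2)) ^ ((1 : ℝ) / 2) :=
  uniform_gradient_interpolation_general μ k₀ k₁
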